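/- The following five families of subsets of ℕ have the cut-shift-and-paste (CuSP) property: the family of syndetic subsets, the family of infinite subsets, the family of sets of positive lower density, the family of sets of positive upper density, and the family of sets of positive upper Banach density. That is, for each of these families F: whenever I₁,…,I_q ⊆ ℕ satisfy ℕ = I₁ ∪ … ∪ I_q and n₁,…,n_q ∈ ℕ (q ≥ 1), then A ∈ F implies ⋃_{j=1}^q (n_j + (A ∩ I_j)) ∈ F. -/

import Mathlib

open Filter Topology Set

noncomputable def lowerDensity (A : Set ℕ) : ℝ :=
  Filter.atTop.liminf fun N : ℕ => ((A ∩ Set.Iic N).ncard : ℝ) / (N + 1)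

noncomputable def upperDensity (A : Set ℕ) : ℝ :=
  Filter.atTop.limsup fun N : ℕ => ((A ∩ Set.Iic N).ncard : ℝ) / (N + 1)

noncomputable def upperBanachDensity (A : Set ℕ) : ℝ :=
  Filter.atTop.limsup fun N : ℕ =>
    ⨆ m : ℕ, (((A ∩ Set.Icc m (m + N)).ncard : ℝ) / (N + 1))

/-- A set of naturals is syndetic if it has bounded gaps. -/
def Syndetic (A : Set ℕ) : Prop :=
  ∃ m : ℕ, ∀ n : ℕ, ∃ k ∈ A, n ≤ k ∧ k < n + m

/-- A set of naturals is an IP-set if it contains all finite sums of distinct terms of some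
strictly increasing sequence of positive integers. -/
def IsIPSet (A : Set ℕ) : Prop :=
  ∃ k : ℕ → ℕ, StrictMono k ∧ (∀ i, 0 < k i) ∧
    ∀ s : Finset ℕ, s.Nonempty → (∑ j ∈ s, k j) ∈ A

/-- A set of naturals is an IP*-set if it meets every IP-set. -/
def IsIPStarSet (A : Set ℕ) : Prop :=
  ∀ B : Set ℕ, IsIPSet B → (A ∩ B).Nonempty

/-- The return set N(x,U) = {n : T^n x ∈ U}. -/
def returnSet {X : Type*} (T : X → X) (x : X) (U : Set X) : Set ℕ :=
  {n : ℕ | T^[n] x ∈ U}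

def IsRecurrentVec {X : Type*} [TopologicalSpace X] (T : X → X) (x : X) : Prop :=
  ∀ U ∈ nhds x, (returnSet T x U).Infinite

def IsUniformlyRecurrentVec {X : Type*} [TopologicalSpace X] (T : X → X) (x : X) : Prop :=
  ∀ U ∈ nhds x, Syndetic (returnSet T x U)

def IsFrequentlyRecurrentVec {X : Type*} [TopologicalSpace X] (T : X → X) (x : X) : Prop :=
  ∀ U ∈ nhds x, 0 < lowerDensity (returnSet T x U)

def IsUpperFrequentlyRecurrentVec {X : Type*} [TopologicalSpace X] (T : X → X) (x : X) : Prop :=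
  ∀ U ∈ nhds x, 0 < upperDensity (returnSet T x U)

def IsReiterativelyRecurrentVec {X : Type*} [TopologicalSpace X] (T : X → X) (x : X) : Prop :=
  ∀ U ∈ nhds x, 0 < upperBanachDensity (returnSet T x U)

def IsIPStarRecurrentVec {X : Type*} [TopologicalSpace X] (T : X → X) (x : X) : Prop :=
  ∀ U ∈ nhds x, IsIPStarSet (returnSet T x U)

def IsHypercyclicVec {X : Type*} [TopologicalSpace X] (T : X → X) (x : X) : Prop :=
  Dense (Set.range fun n : ℕ => T^[n] x)

def IsFrequentlyHypercyclicVec {X : Type*} [TopologicalSpace X] (T : X → X) (x : X) : Prop :=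
  ∀ U : Set X, IsOpen U → U.Nonempty → 0 < lowerDensity (returnSet T x U)

def IsUpperFrequentlyHypercyclicVec {X : Type*} [TopologicalSpace X] (T : X → X) (x : X) : Prop :=
  ∀ U : Set X, IsOpen U → U.Nonempty → 0 < upperDensity (returnSet T x U)

def IsReiterativelyHypercyclicVec {X : Type*} [TopologicalSpace X] (T : X → X) (x : X) : Prop :=
  ∀ U : Set X, IsOpen U → U.Nonempty → 0 < upperBanachDensity (returnSet T x U)

/-- Power boundedness: the iterates form an equicontinuous family (at zero). -/
def PowerBounded {X : Type*} [Zero X] [TopologicalSpace X] (T : X → X) : Prop :=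
  ∀ W₁ ∈ nhds (0 : X), ∃ W₂ ∈ nhds (0 : X), ∀ n : ℕ, ∀ x ∈ W₂, T^[n] x ∈ W₁

/-- The cut-shift-and-paste property for a family of subsets of ℕ. -/
def CuSP (F : Set ℕ → Prop) : Prop :=
  ∀ q : ℕ, 0 < q → ∀ I : Fin q → Set ℕ, (⋃ j, I j) = Set.univ →
    ∀ shift : Fin q → ℕ, ∀ A : Set ℕ, F A →
      F (⋃ j, (fun k => shift j + k) '' (A ∩ I j))

/-!
Fix for every `a` an index `j` with `a ∈ I j`; then `a` is moved forward by `shift j`, which is at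
most `M = ∑ j, shift j`, and at most `q` points of `A` land on the same point. Hence every point of
`A` has a point of the new set `B` at most `M` further on, which preserves syndeticity and
infiniteness, and every window `W = [m, m + N]` satisfies `|A ∩ W| ≤ q |B ∩ W| + M`. Dividing by
`N + 1`, the error `M / (N + 1)` vanishes in the limit, so lower, upper and upper Banach density of
`B` stay positive (they are at least a fixed fraction of those of `A`).
-/

def cutShiftPaste {q : ℕ} (I : Fin q → Set ℕ) (shift : Fin q → ℕ) (A : Set ℕ) : Set ℕ :=
  ⋃ j, (fun k => shift j + k) '' (A ∩ I j)

lemma ncard_inter_Icc_add_le (B : Set ℕ) (m s N : ℕ) :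
    (B ∩ Icc (m + s) (m + N + s)).ncard ≤ (B ∩ Icc m (m + N)).ncard + s := by
  have hsub : B ∩ Icc (m + s) (m + N + s) ⊆ (B ∩ Icc m (m + N)) ∪ Ioc (m + N) (m + N + s) := by
    rintro x ⟨hB, hlo, hhi⟩
    by_cases hx : x ≤ m + N
    · exact Or.inl ⟨hB, by omega, hx⟩
    · exact Or.inr ⟨by omega, hhi⟩
  calc (B ∩ Icc (m + s) (m + N + s)).ncard
      ≤ ((B ∩ Icc m (m + N)) ∪ Ioc (m + N) (m + N + s)).ncard :=
        ncard_le_ncard hsub (((finite_Icc _ _).inter_of_right B).union (finite_Ioc _ _))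
    _ ≤ (B ∩ Icc m (m + N)).ncard + (Ioc (m + N) (m + N + s)).ncard := ncard_union_le _ _
    _ = (B ∩ Icc m (m + N)).ncard + s := by
        rw [ncard_Ioc_nat]; omega

section CutShiftPaste

variable {q : ℕ} {I : Fin q → Set ℕ} {shift : Fin q → ℕ} {A : Set ℕ}

lemma exists_mem_cutShiftPaste (hI : ⋃ j, I j = univ) {a : ℕ} (ha : a ∈ A) :
    ∃ b ∈ cutShiftPaste I shift A, a ≤ b ∧ b ≤ a + ∑ j, shift j := by
  obtain ⟨j, hj⟩ := mem_iUnion.mp (hI ▸ mem_univ a : a ∈ ⋃ j, I j)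
  refine ⟨shift j + a, mem_iUnion.mpr ⟨j, a, ⟨ha, hj⟩, rfl⟩, by omega, ?_⟩
  have := Finset.single_le_sum (fun j _ => Nat.zero_le (shift j)) (Finset.mem_univ j)
  omega

/-- Each of the `q` pieces `A ∩ I j` shifts injectively into the window translated by `shift j`,
which meets `cutShiftPaste I shift A` in at most `shift j` more points than the window itself. -/
lemma ncard_inter_Icc_le_cutShiftPaste (hI : ⋃ j, I j = univ) (m N : ℕ) :
    (A ∩ Icc m (m + N)).ncard ≤
      q * (cutShiftPaste I shift A ∩ Icc m (m + N)).ncard + ∑ j, shift j := by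
  set B := cutShiftPaste I shift A
  have hpiece : ∀ j, (A ∩ I j ∩ Icc m (m + N)).ncard ≤ (B ∩ Icc m (m + N)).ncard + shift j := by
    intro j
    have hmaps : (fun k => shift j + k) '' (A ∩ I j ∩ Icc m (m + N)) ⊆
        B ∩ Icc (m + shift j) (m + N + shift j) := by
      rintro _ ⟨a, ⟨haI, hlo, hhi⟩, rfl⟩
      dsimp only
      exact ⟨mem_iUnion.mpr ⟨j, a, haI, rfl⟩, by omega, by omega⟩
    calc (A ∩ I j ∩ Icc m (m + N)).ncard
        = ((fun k => shift j + k) '' (A ∩ I j ∩ Icc m (m + N))).ncard :=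
          (ncard_image_of_injective _ (add_right_injective _)).symm
      _ ≤ (B ∩ Icc (m + shift j) (m + N + shift j)).ncard :=
          ncard_le_ncard hmaps ((finite_Icc _ _).inter_of_right B)
      _ ≤ _ := ncard_inter_Icc_add_le B m (shift j) N
  have hcover : A ∩ Icc m (m + N) = ⋃ j, A ∩ I j ∩ Icc m (m + N) := by
    rw [← iUnion_inter, ← inter_iUnion, hI, inter_univ]
  calc (A ∩ Icc m (m + N)).ncard
      ≤ ∑ j, (A ∩ I j ∩ Icc m (m + N)).ncard := hcover ▸ ncard_iUnion_le_of_fintype _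
    _ ≤ ∑ j, ((B ∩ Icc m (m + N)).ncard + shift j) := Finset.sum_le_sum fun j _ => hpiece j
    _ = q * (B ∩ Icc m (m + N)).ncard + ∑ j, shift j := by
        simp [Finset.sum_add_distrib]

lemma ncard_inter_Icc_div_le_cutShiftPaste (hI : ⋃ j, I j = univ) (m N : ℕ) :
    ((A ∩ Icc m (m + N)).ncard : ℝ) / (N + 1) ≤
      q * (((cutShiftPaste I shift A ∩ Icc m (m + N)).ncard : ℝ) / (N + 1)) +
        ((∑ j, shift j : ℕ) : ℝ) / (N + 1) := by
  rw [← mul_div_assoc, ← add_div]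
  gcongr
  exact_mod_cast ncard_inter_Icc_le_cutShiftPaste hI m N

end CutShiftPaste

lemma ncard_inter_Icc_div_le_one (S : Set ℕ) (m N : ℕ) :
    ((S ∩ Icc m (m + N)).ncard : ℝ) / (N + 1) ≤ 1 := by
  rw [div_le_one (by positivity)]
  have hcard : (Icc m (m + N)).ncard = N + 1 := by rw [ncard_Icc_nat]; omega
  exact_mod_cast hcard ▸ ncard_le_ncard inter_subset_right (finite_Icc _ _)

lemma tendsto_const_div_add_one_atTop_nhds_zero (C : ℝ) :
    Tendsto (fun N : ℕ => C / ((N : ℝ) + 1)) atTop (𝓝 0) := by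
  simpa using (tendsto_add_atTop_iff_nat 1).2 (tendsto_const_div_atTop_nhds_zero_nat C)

section Comparison

variable {ι : Type*} {l : Filter ι} {u v ε : ι → ℝ} {c : ℝ}

lemma div_four_mul_le_of_le_mul_add {d : ℝ} (hc : 0 < c) {i : ι} (hu : d / 2 < u i)
    (hε : ε i < d / 4) (h : u i ≤ c * v i + ε i) : d / (4 * c) ≤ v i := by
  rw [div_le_iff₀ (by positivity)]
  linarith

lemma liminf_pos_of_le_mul_add (hc : 0 < c) (hε : Tendsto ε l (𝓝 0))
    (hu : IsBoundedUnder (· ≥ ·) l u) (hv : IsCoboundedUnder (· ≥ ·) l v)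
    (h : ∀ i, u i ≤ c * v i + ε i) (hpos : 0 < liminf u l) : 0 < liminf v l := by
  set d := liminf u l
  have hu' : ∀ᶠ i in l, d / 2 < u i := eventually_lt_of_lt_liminf (half_lt_self hpos) hu
  have hε' : ∀ᶠ i in l, ε i < d / 4 := hε.eventually (gt_mem_nhds (by positivity))
  have hv' : ∀ᶠ i in l, d / (4 * c) ≤ v i := by
    filter_upwards [hu', hε'] with i hui hεi using div_four_mul_le_of_le_mul_add hc hui hεi (h i)
  exact (div_pos hpos (by positivity)).trans_le (le_liminf_of_le hv hv')

lemma limsup_pos_of_le_mul_add (hc : 0 < c) (hε : Tendsto ε l (𝓝 0))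
    (hu : IsCoboundedUnder (· ≤ ·) l u) (hv : IsBoundedUnder (· ≤ ·) l v)
    (h : ∀ i, u i ≤ c * v i + ε i) (hpos : 0 < limsup u l) : 0 < limsup v l := by
  set d := limsup u l
  have hu' : ∃ᶠ i in l, d / 2 < u i := frequently_lt_of_lt_limsup hu (half_lt_self hpos)
  have hε' : ∀ᶠ i in l, ε i < d / 4 := hε.eventually (gt_mem_nhds (by positivity))
  have hv' : ∃ᶠ i in l, d / (4 * c) ≤ v i :=
    (hu'.and_eventually hε').mono fun i ⟨hui, hεi⟩ =>
      div_four_mul_le_of_le_mul_add hc hui hεi (h i)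
  exact (div_pos hpos (by positivity)).trans_le (le_limsup_of_frequently_le hv' hv)

end Comparison

lemma cuSP_syndetic : CuSP Syndetic := by
  rintro q - I hI shift A ⟨g, hg⟩
  refine ⟨g + ∑ j, shift j, fun n => ?_⟩
  obtain ⟨a, ha, hna, hag⟩ := hg n
  obtain ⟨b, hb, hab, hba⟩ := exists_mem_cutShiftPaste (shift := shift) hI ha
  exact ⟨b, hb, hna.trans hab, by omega⟩

lemma cuSP_infinite : CuSP Set.Infinite := by
  intro q _ I hI shift A hA
  refine infinite_of_not_bddAbove fun ⟨n, hn⟩ => ?_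
  obtain ⟨a, ha, hna⟩ := hA.exists_gt n
  obtain ⟨b, hb, hab, -⟩ := exists_mem_cutShiftPaste (shift := shift) hI ha
  exact (hna.trans_le hab).not_ge (hn hb)

lemma Iic_eq_Icc_zero (N : ℕ) : Iic N = Icc 0 (0 + N) := by
  ext; simp

lemma cuSP_lowerDensity_pos : CuSP (fun A => 0 < lowerDensity A) := by
  intro q hq I hI shift A hA
  refine liminf_pos_of_le_mul_add (Nat.cast_pos.mpr hq)
    (tendsto_const_div_add_one_atTop_nhds_zero ((∑ j, shift j : ℕ) : ℝ))
    (isBoundedUnder_of ⟨0, fun N => by positivity⟩)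
    (isCoboundedUnder_ge_of_le atTop (x := 1) fun N => ?_) (fun N => ?_) hA
  · rw [Iic_eq_Icc_zero]; exact ncard_inter_Icc_div_le_one _ 0 N
  · simp only [Iic_eq_Icc_zero]; exact ncard_inter_Icc_div_le_cutShiftPaste hI 0 N

lemma cuSP_upperDensity_pos : CuSP (fun A => 0 < upperDensity A) := by
  intro q hq I hI shift A hA
  refine limsup_pos_of_le_mul_add (Nat.cast_pos.mpr hq)
    (tendsto_const_div_add_one_atTop_nhds_zero ((∑ j, shift j : ℕ) : ℝ))
    (isCoboundedUnder_le_of_le atTop fun N => by positivity)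
    (isBoundedUnder_of ⟨1, fun N => ?_⟩) (fun N => ?_) hA
  · rw [Iic_eq_Icc_zero]; exact ncard_inter_Icc_div_le_one _ 0 N
  · simp only [Iic_eq_Icc_zero]; exact ncard_inter_Icc_div_le_cutShiftPaste hI 0 N

lemma cuSP_upperBanachDensity_pos : CuSP (fun A => 0 < upperBanachDensity A) := by
  intro q hq I hI shift A hA
  have hbdd : ∀ (S : Set ℕ) (N : ℕ),
      BddAbove (range fun m : ℕ => ((S ∩ Icc m (m + N)).ncard : ℝ) / (N + 1)) :=
    fun S N => ⟨1, by rintro _ ⟨m, rfl⟩; exact ncard_inter_Icc_div_le_one S m N⟩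
  refine limsup_pos_of_le_mul_add (Nat.cast_pos.mpr hq)
    (tendsto_const_div_add_one_atTop_nhds_zero ((∑ j, shift j : ℕ) : ℝ))
    (isCoboundedUnder_le_of_le atTop fun N => Real.iSup_nonneg fun m => by positivity)
    (isBoundedUnder_of ⟨1, fun N => ciSup_le fun m => ncard_inter_Icc_div_le_one _ m N⟩)
    (fun N => ciSup_le fun m => ?_) hA
  exact (ncard_inter_Icc_div_le_cutShiftPaste hI m N).trans
    (by gcongr; exact le_ciSup (hbdd _ N) m)

theorem stmt10 :
    CuSP Syndetic ∧
    CuSP Set.Infinite ∧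
    CuSP (fun A => 0 < lowerDensity A) ∧
    CuSP (fun A => 0 < upperDensity A) ∧
    CuSP (fun A => 0 < upperBanachDensity A) :=
  ⟨cuSP_syndetic, cuSP_infinite, cuSP_lowerDensity_pos, cuSP_upperDensity_pos,
    cuSP_upperBanachDensity_pos⟩
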